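/- For every γ ∈ (0,∞), t > 0 and fixed x ∈ ℝ̈ with |x| > 0, the transition density y ↦ g_t(x,y) belongs to the domain of the transmission condition: it is smooth on each half-line, and ∂_y g_t(x, y)|_{y=0⁻} = ∂_y g_t(x, y)|_{y=0⁺} = γ ( g_t(x, 0⁺) − g_t(x, 0⁻) ). -/

import Mathlib

open MeasureTheory ProbabilityTheory Filter Set
open scoped NNReal ENNReal Topology

noncomputable section

/-- The space `ℝ̈ = (-∞,0⁻] ∪ [0⁺,+∞)`, the disjoint union of two half-lines.
A point is encoded by the half-line it belongs to (`side = true` for the positive one)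
and its distance `rad` to the origin. -/
structure Rddot where
  side : Bool
  rad : ℝ≥0

namespace Rddot

/-- The natural projection `π̈ : ℝ̈ → ℝ` (identifying `0⁺` and `0⁻` with `0`). -/
def val (x : Rddot) : ℝ := if x.side then (x.rad : ℝ) else -(x.rad : ℝ)

/-- An auxiliary `{0,1}`-valued marker of the side, used to define the metric
`d(x,y) = |x - y| + 1_{xy ≤ 0}` on `ℝ̈`. -/
def ind (x : Rddot) : ℝ := if x.side then 0 else 1

/-- `|x|`, the distance of `x ∈ ℝ̈` to the origin. -/
def abs (x : Rddot) : ℝ := (x.rad : ℝ)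

instance : MeasurableSpace Rddot := MeasurableSpace.comap (fun x => (x.side, x.rad)) inferInstance

lemma eq_of_val_ind {x y : Rddot} (hv : x.val = y.val) (hi : x.ind = y.ind) : x = y := by
  rcases x with ⟨bx, rx⟩
  rcases y with ⟨by', ry⟩
  cases bx <;> cases by' <;> simp_all [val, ind]

/-- The metric `d(x,y) = |x-y| + 1_{xy ≤ 0}` on `ℝ̈`: the distance between the real
projections, plus `1` if the two points lie on different half-lines. -/
noncomputable instance : MetricSpace Rddot where
  dist x y := |x.val - y.val| + |x.ind - y.ind|
  dist_self x := by simp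
  dist_comm x y := by simp [abs_sub_comm]
  dist_triangle x y z := by
    show |x.val - z.val| + |x.ind - z.ind| ≤
      (|x.val - y.val| + |x.ind - y.ind|) + (|y.val - z.val| + |y.ind - z.ind|)
    have h1 : |x.val - z.val| ≤ |x.val - y.val| + |y.val - z.val| := abs_sub_le _ _ _
    have h2 : |x.ind - z.ind| ≤ |x.ind - y.ind| + |y.ind - z.ind| := abs_sub_le _ _ _
    linarith
  eq_of_dist_eq_zero := by
    intro x y h
    have h' : |x.val - y.val| + |x.ind - y.ind| = 0 := h
    have h1 : |x.val - y.val| = 0 := by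
      have := abs_nonneg (x.val - y.val)
      have := abs_nonneg (x.ind - y.ind)
      linarith
    have h2 : |x.ind - y.ind| = 0 := by
      have := abs_nonneg (x.val - y.val)
      have := abs_nonneg (x.ind - y.ind)
      linarith
    exact eq_of_val_ind (sub_eq_zero.mp (abs_eq_zero.mp h1))
      (sub_eq_zero.mp (abs_eq_zero.mp h2))

end Rddot

/-- A path indexed by `ℝ≥0` is càdlàg: right-continuous with left limits. -/
def CadlagOn {E : Type*} [TopologicalSpace E] (f : ℝ≥0 → E) : Prop :=
  (∀ t : ℝ≥0, ContinuousWithinAt f (Set.Ici t) t) ∧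
  (∀ t : ℝ≥0, 0 < t → ∃ l : E, Filter.Tendsto f (nhdsWithin t (Set.Iio t)) (nhds l))

/-- The natural filtration of a process `X`: `σ(X_u, u ≤ t)`. -/
def natSigma {Ω E : Type*} [MeasurableSpace E] (X : ℝ≥0 → Ω → E) (t : ℝ≥0) :
    MeasurableSpace Ω :=
  ⨆ u ∈ Set.Iic t, MeasurableSpace.comap (X u) inferInstance

/-- `M` is a martingale with respect to the filtration generated by the process `X`. -/
def IsMartingaleNat {Ω E : Type*} [MeasurableSpace Ω] [MeasurableSpace E] (P : Measure Ω)
    (X : ℝ≥0 → Ω → E) (M : ℝ≥0 → Ω → ℝ) : Prop :=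
  (∀ t, Integrable (M t) P) ∧
  (∀ t, Measurable[natSigma X t] (M t)) ∧
  ∀ s t : ℝ≥0, s ≤ t → P[M t|natSigma X s] =ᵐ[P] M s

/-- `X` is a Markov process (with respect to its natural filtration). -/
def IsMarkovProc {Ω E : Type*} [MeasurableSpace Ω] [MeasurableSpace E] (P : Measure Ω)
    (X : ℝ≥0 → Ω → E) : Prop :=
  ∀ s t : ℝ≥0, s ≤ t → ∀ g : E → ℝ, Measurable g → (∀ x, |g x| ≤ 1) →
    P[(fun ω => g (X t ω))|natSigma X s]
      =ᵐ[P] P[(fun ω => g (X t ω))|MeasurableSpace.comap (X s) inferInstance]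

/-- The domain `𝒟^γ` of the generator of partially reflected Brownian motion with
permeability `γ ∈ [0,∞]`: functions on `ℝ̈` vanishing at infinity, twice continuously
differentiable on each half-line (`pos` and `neg` are the restrictions to `[0⁺,∞)` and
`(-∞,0⁻]`, the latter reparametrized by the distance to the origin), and satisfying the
transmission condition `f'(0⁻) = f'(0⁺) = γ (f(0⁺) - f(0⁻))` (for `γ = ∞` this means
`f'(0⁻) = f'(0⁺)` and `f(0⁺) = f(0⁻)`). -/
structure DomGamma (γ : ℝ≥0∞) where
  pos : ℝ → ℝ
  neg : ℝ → ℝ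
  contDiff_pos : ContDiffOn ℝ 2 pos (Set.Ici 0)
  contDiff_neg : ContDiffOn ℝ 2 neg (Set.Ici 0)
  vanish_pos : Filter.Tendsto pos Filter.atTop (nhds 0)
  vanish_neg : Filter.Tendsto neg Filter.atTop (nhds 0)
  /-- `f'(0⁻) = f'(0⁺)`; note that `f'(0⁻) = - neg'(0)` since `neg` is parametrized by
  the distance to the origin. -/
  deriv_eq : -(derivWithin neg (Set.Ici 0) 0) = derivWithin pos (Set.Ici 0) 0
  /-- `f'(0⁺) = γ (f(0⁺) - f(0⁻))`, and for `γ = ∞`, `f(0⁺) = f(0⁻)`. -/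
  transmission : if γ = ⊤ then pos 0 = neg 0
    else derivWithin pos (Set.Ici 0) 0 = γ.toReal * (pos 0 - neg 0)

namespace DomGamma

variable {γ : ℝ≥0∞}

/-- Evaluation of an element of `𝒟^γ` as a function on `ℝ̈`. -/
def eval (f : DomGamma γ) (x : Rddot) : ℝ := if x.side then f.pos x.abs else f.neg x.abs

/-- The second derivative `f''` of `f ∈ 𝒟^γ` at a point of `ℝ̈` (one-sided at `0⁺`, `0⁻`). -/
def d2 (f : DomGamma γ) (x : Rddot) : ℝ :=
  if x.side then iteratedDerivWithin 2 f.pos (Set.Ici 0) x.abs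
  else iteratedDerivWithin 2 f.neg (Set.Ici 0) x.abs

end DomGamma

/-- The generator `L^γ f = (σ²/2) f''` on `𝒟^γ`. -/
def generator (γ : ℝ≥0∞) (σ2 : ℝ) (f : DomGamma γ) (x : Rddot) : ℝ := σ2 / 2 * f.d2 x

/-- `X` is a solution of the martingale problem associated with `L^γ` (with `σ² = σ2`):
a càdlàg `ℝ̈`-valued Markov process such that for every `f ∈ 𝒟^γ`,
`f(X_t) - ∫₀ᵗ L^γ f(X_s) ds` is a martingale for the filtration generated by `X`. -/
def SolvesMP {Ω : Type*} [MeasurableSpace Ω] (γ : ℝ≥0∞) (σ2 : ℝ) (P : Measure Ω)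
    (X : ℝ≥0 → Ω → Rddot) : Prop :=
  (∀ t, Measurable (X t)) ∧
  (∀ᵐ ω ∂P, CadlagOn fun t => X t ω) ∧
  IsMarkovProc P X ∧
  ∀ f : DomGamma γ, IsMartingaleNat P X
    (fun t ω => f.eval (X t ω) - ∫ s in (0:ℝ)..(t:ℝ), generator γ σ2 f (X s.toNNReal ω))

/-- The law of the path of a process, as a measure on the (Skorokhod) path space. -/
def pathLaw {Ω E : Type*} [MeasurableSpace Ω] [MeasurableSpace E] (P : Measure Ω)
    (X : ℝ≥0 → Ω → E) : Measure (ℝ≥0 → E) := P.map fun ω t => X t ω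

/-- `B` is a Brownian motion started from `x0` with variance parameter `σ2`:
continuous paths and independent, stationary Gaussian increments. -/
def IsBrownianMotion {Ω : Type*} [MeasurableSpace Ω] (P : Measure Ω) (B : ℝ≥0 → Ω → ℝ)
    (x0 : ℝ) (σ2 : ℝ≥0) : Prop :=
  (∀ t, Measurable (B t)) ∧
  (∀ᵐ ω ∂P, B 0 ω = x0) ∧
  (∀ᵐ ω ∂P, Continuous fun t => B t ω) ∧
  (∀ s t : ℝ≥0, s ≤ t →
    P.map (fun ω => B t ω - B s ω) = gaussianReal 0 (σ2 * (t - s))) ∧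
  ∀ (n : ℕ) (τ : Fin (n+1) → ℝ≥0), Monotone τ →
    iIndepFun
      (fun i : Fin n => fun ω => B (τ i.succ) ω - B (τ i.castSucc) ω) P

/-- Time spent by the path `g` strictly above level `c` in absolute value, up to time `u`. -/
def occAbove (c : ℝ) (g : ℝ≥0 → ℝ) (u : ℝ≥0) : ℝ :=
  ∫ s in (0:ℝ)..(u:ℝ), if c < |g s.toNNReal| then (1:ℝ) else 0

/-- Time spent by the path `g` at levels `≤ c` in absolute value, up to time `u`. -/
def occBelow (c : ℝ) (g : ℝ≥0 → ℝ) (u : ℝ≥0) : ℝ :=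
  ∫ s in (0:ℝ)..(u:ℝ), if |g s.toNNReal| ≤ c then (1:ℝ) else 0

/-- The time change `τ(t) = inf{u > 0 : ∫₀ᵘ 1_{|g_s| > c} ds > t}`. -/
def tauTC (c : ℝ) (g : ℝ≥0 → ℝ) (t : ℝ≥0) : ℝ≥0 := sInf {u : ℝ≥0 | (t:ℝ) < occAbove c g u}

/-- The time change `θ(t) = inf{u > 0 : ∫₀ᵘ 1_{|g_s| ≤ c} ds > t}`. -/
def thetaTC (c : ℝ) (g : ℝ≥0 → ℝ) (t : ℝ≥0) : ℝ≥0 := sInf {u : ℝ≥0 | (t:ℝ) < occBelow c g u}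

/-- The gluing map `r : ℝ → ℝ̈`: it maps `[1/(2γ),∞)` to `[0⁺,∞)` and `(-∞,-1/(2γ)]`
to `(-∞,0⁻]` by translation, `[0,1/(2γ))` to `0⁺` and `(-1/(2γ),0)` to `0⁻`. -/
def rmap (γ : ℝ) (z : ℝ) : Rddot :=
  if 0 ≤ z then ⟨true, (z - 1/(2*γ)).toNNReal⟩ else ⟨false, (-z - 1/(2*γ)).toNNReal⟩

/-- The right inverse `r⁻¹(x) = x + sign(x)/(2γ)` of `r`. -/
def rinv (γ : ℝ) (x : Rddot) : ℝ := x.val + (if x.side then 1/(2*γ) else -(1/(2*γ)))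

/-- The "speed and scale" construction: `X_t = r(B_{τ(t)})`. -/
def speedScale {Ω : Type*} (γ : ℝ) (B : ℝ≥0 → Ω → ℝ) (t : ℝ≥0) (ω : Ω) : Rddot :=
  rmap γ (B (tauTC (1/(2*γ)) (fun s => B s ω) t) ω)

/-- The Gaussian kernel `G_t(z) = (2πt)^{-1/2} exp(-z²/(2t))`. -/
def gaussK (t z : ℝ) : ℝ := (Real.sqrt (2 * Real.pi * t))⁻¹ * Real.exp (-(z^2) / (2*t))

/-- `∫₀^∞ e^{-2γl} G_t(a+b+l) dl`. -/
def barrierInt (γ t a b : ℝ) : ℝ :=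
  ∫ l in Set.Ioi (0:ℝ), Real.exp (-(2*γ*l)) * gaussK t (a + b + l)

/-- The transition density of partially reflected Brownian motion with permeability `γ`,
as a function of `t`, `a = |x|`, `b = |y|` and of whether `x` and `y` lie on the same
half-line. -/
def transDens (γ t a b : ℝ) (same : Bool) : ℝ :=
  if same then gaussK t (a - b) + gaussK t (a + b) - 2*γ*barrierInt γ t a b
  else 2*γ*barrierInt γ t a b

/-- `(1/(2ε)) ∫₀ᵗ 1_{|h_s| ≤ ε} ds`, the approximation of the local time at the origin. -/
def localTimeApprox (h : ℝ≥0 → ℝ) (t : ℝ≥0) (ε : ℝ) : ℝ := (1/(2*ε)) * occBelow ε h t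

/-- `L` is the local time at the origin of the path `h`:
`L_t = lim_{ε↓0} (1/(2ε)) ∫₀ᵗ 1_{|h_s| ≤ ε} ds`. -/
def IsLocalTimePath (h : ℝ≥0 → ℝ) (L : ℝ≥0 → ℝ) : Prop :=
  ∀ t : ℝ≥0, Filter.Tendsto (fun ε => localTimeApprox h t ε)
    (nhdsWithin 0 (Set.Ioi 0)) (nhds (L t))

/-- `μ` is the law (on path space) of the absolute value of a Brownian motion with
variance parameter `σ2` started from `a`, i.e. of reflected Brownian motion. -/
def ReflBMLaw (a : ℝ) (σ2 : ℝ≥0) (μ : Measure (ℝ≥0 → ℝ)) : Prop :=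
  ∃ (Ω' : Type) (m' : MeasurableSpace Ω') (P' : @Measure Ω' m') (B' : ℝ≥0 → Ω' → ℝ),
    @IsProbabilityMeasure Ω' m' P' ∧ @IsBrownianMotion Ω' m' P' B' a σ2 ∧
    μ = @Measure.map Ω' (ℝ≥0 → ℝ) m' _ (fun ω t => |B' t ω|) P'

/-- `μ` is the law (on path space) of a Brownian motion with variance parameter `σ2`
started from `a`. -/
def BMLaw (a : ℝ) (σ2 : ℝ≥0) (μ : Measure (ℝ≥0 → ℝ)) : Prop :=
  ∃ (Ω' : Type) (m' : MeasurableSpace Ω') (P' : @Measure Ω' m') (B' : ℝ≥0 → Ω' → ℝ),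
    @IsProbabilityMeasure Ω' m' P' ∧ @IsBrownianMotion Ω' m' P' B' a σ2 ∧
    μ = @Measure.map Ω' (ℝ≥0 → ℝ) m' _ (fun ω t => B' t ω) P'

/-- `W` is a reflected Brownian motion started from `a`: it is distributed as the
absolute value of a standard Brownian motion started from `a`. -/
def IsReflectedBM {Ω : Type*} [MeasurableSpace Ω] (P : Measure Ω) (W : ℝ≥0 → Ω → ℝ)
    (a : ℝ) : Prop :=
  (∀ t, Measurable (W t)) ∧ ReflBMLaw a 1 (P.map fun ω t => W t ω)

/-- `N` is a Poisson process with rate `r`. -/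
def IsPoissonProcess {Ω : Type*} [MeasurableSpace Ω] (P : Measure Ω) (N : ℝ≥0 → Ω → ℕ)
    (r : ℝ≥0) : Prop :=
  (∀ t, Measurable (N t)) ∧
  (∀ᵐ ω ∂P, N 0 ω = 0) ∧
  (∀ᵐ ω ∂P, Monotone fun t => N t ω) ∧
  (∀ s t : ℝ≥0, s ≤ t →
    P.map (fun ω => N t ω - N s ω) = poissonMeasure (r * (t - s))) ∧
  ∀ (n : ℕ) (τ : Fin (n+1) → ℝ≥0), Monotone τ →
    iIndepFun
      (fun i : Fin n => fun ω => N (τ i.succ) ω - N (τ i.castSucc) ω) P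


/-- The Skorokhod distance between `f` and `g` on the time interval `[0,T]`:
the infimum over increasing time changes `λ` of
`max(sup |λ(t) - t|, sup |f(λ(t)) - g(t)|)` (here expressed via a set of admissible `ε`). -/
def dskoT (T : ℝ) (f g : ℝ≥0 → ℝ) : ℝ :=
  sInf {ε : ℝ | 0 ≤ ε ∧ ∃ lam : ℝ → ℝ, StrictMonoOn lam (Set.Icc 0 T) ∧
    ContinuousOn lam (Set.Icc 0 T) ∧ lam 0 = 0 ∧ lam T = T ∧
    ∀ t ∈ Set.Icc 0 T, |lam t - t| ≤ ε ∧ |f (lam t).toNNReal - g t.toNNReal| ≤ ε}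

/-- The metric `d_sko(f,g) = ∫₀^∞ e^{-t} (d_sko^t(f,g) ∧ 1) dt` for Skorokhod
convergence on compact time intervals. -/
def dsko (f g : ℝ≥0 → ℝ) : ℝ :=
  ∫ T in Set.Ioi (0:ℝ), Real.exp (-T) * min (dskoT T f g) 1

/-- A set of paths is (sequentially) compact for the metric `d_sko`. -/
def DSkoSeqCompact (K : Set (ℝ≥0 → ℝ)) : Prop :=
  ∀ u : ℕ → (ℝ≥0 → ℝ), (∀ k, u k ∈ K) →
    ∃ (φ : ℕ → ℕ) (g : ℝ≥0 → ℝ), StrictMono φ ∧ g ∈ K ∧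
      Filter.Tendsto (fun k => dsko (u (φ k)) g) Filter.atTop (nhds 0)

/-- Convergence in distribution, in the Skorokhod space `(D(ℝ₊,ℝ), d_sko)`, of a sequence
of processes (each defined on its own probability space) to a limiting process:
expectations of bounded measurable functionals which are `d_sko`-continuous at càdlàg
paths converge. -/
def ConvDistSkoFam (Ω : ℕ → Type) (mΩ : ∀ n, MeasurableSpace (Ω n))
    (P : ∀ n, @Measure (Ω n) (mΩ n)) (Y : ∀ n, Ω n → (ℝ≥0 → ℝ))
    {Ω' : Type*} [MeasurableSpace Ω'] (P' : Measure Ω') (Y' : Ω' → (ℝ≥0 → ℝ)) : Prop :=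
  ∀ F : (ℝ≥0 → ℝ) → ℝ, Measurable F → (∃ C, ∀ h, |F h| ≤ C) →
    (∀ h, CadlagOn h → ∀ ε : ℝ, 0 < ε → ∃ δ : ℝ, 0 < δ ∧
      ∀ h', CadlagOn h' → dsko h h' < δ → |F h' - F h| < ε) →
    Filter.Tendsto (fun n => ∫ ω, F (Y n ω) ∂(P n)) Filter.atTop
      (nhds (∫ ω, F (Y' ω) ∂P'))

/-- Jump rates of the random walk with an obstacle of width `K`:
nearest-neighbour jumps at rate `m/2`, reduced to `c m/2` on the `K` central edges
(for odd `K` the site `0` is removed and `-1`, `+1` are adjacent). -/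
def rateGen (K : ℕ) (m c : ℝ) (i j : ℤ) : ℝ :=
  if K % 2 = 0 then
    (if (i - j).natAbs = 1 then (if (K : ℤ)/2 < max |i| |j| then m/2 else c*m/2) else 0)
  else
    (if i ≠ 0 ∧ j ≠ 0 ∧ ((i - j).natAbs = 1 ∨ (i = 1 ∧ j = -1) ∨ (i = -1 ∧ j = 1)) then
      (if ((K : ℤ)+1)/2 < max |i| |j| then m/2 else c*m/2) else 0)

/-- The generator of the random walk with an obstacle:
`Qf(i) = Σ_j q(i,j)(f(j) - f(i))`. -/
def QGen (K : ℕ) (m c : ℝ) (f : ℤ → ℝ) (i : ℤ) : ℝ :=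
  rateGen K m c i (i-1) * (f (i-1) - f i) + rateGen K m c i (i+1) * (f (i+1) - f i) +
    (if i = 1 ∨ i = -1 then rateGen K m c i (-i) * (f (-i) - f i) else 0)

/-- A path with values in a discrete space is a right-continuous step function with
left limits. -/
def StepPath {E : Type*} (f : ℝ≥0 → E) : Prop :=
  (∀ t : ℝ≥0, ∃ ε : ℝ≥0, 0 < ε ∧ ∀ s, t ≤ s → s < t + ε → f s = f t) ∧
  (∀ t : ℝ≥0, 0 < t → ∃ ε : ℝ≥0, 0 < ε ∧ ε ≤ t ∧
    ∀ s s', t - ε ≤ s → s < t → t - ε ≤ s' → s' < t → f s = f s')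

/-- `ξ` is the continuous-time random walk with an obstacle of width `K`, migration rate
`m`, barrier permeability parameter `c`, started from `x0`: a right-continuous jump
process on `ℤ` solving the martingale problem for the jump rates `rateGen K m c`. -/
def IsRWGen {Ω : Type*} [MeasurableSpace Ω] (K : ℕ) (m c : ℝ) (x0 : ℤ) (P : Measure Ω)
    (ξ : ℝ≥0 → Ω → ℤ) : Prop :=
  (∀ t, Measurable (ξ t)) ∧
  (∀ᵐ ω ∂P, ξ 0 ω = x0) ∧
  (∀ᵐ ω ∂P, StepPath fun t => ξ t ω) ∧
  (K % 2 = 1 → ∀ᵐ ω ∂P, ∀ t, ξ t ω ≠ 0) ∧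
  ∀ f : ℤ → ℝ, (∃ C, ∀ i, |f i| ≤ C) →
    IsMartingaleNat P ξ
      (fun t ω => f (ξ t ω) - ∫ s in (0:ℝ)..(t:ℝ), QGen K m c f (ξ s.toNNReal ω))

/-- The rescaled random walk `X_n(t) = ξ_n(nt)/√n`, as a real-valued path. -/
def rescaledRW {Ω : Type*} (n : ℕ) (ξ : ℝ≥0 → Ω → ℤ) (ω : Ω) : ℝ≥0 → ℝ :=
  fun t => (ξ ((n : ℝ≥0) * t) ω : ℝ) / Real.sqrt n

/-- The successive crossing times of the origin of a real-valued path: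
`T_0 = 0`, `T_{i+1} = inf{t > T_i : h(T_i) h(t) < 0}`. -/
def crossTimes (h : ℝ≥0 → ℝ) : ℕ → ℝ≥0
  | 0 => 0
  | i+1 => sInf {t : ℝ≥0 | crossTimes h i < t ∧ h (crossTimes h i) * h t < 0}

/-- The successive jump times of a step path, valued in `ℝ≥0∞` (`∞` if there are no
more jumps). -/
def jumpTimes (h : ℝ≥0 → ℝ) : ℕ → ℝ≥0∞
  | 0 => 0
  | k+1 => sInf ((fun s : ℝ≥0 => (s : ℝ≥0∞)) ''
      {s : ℝ≥0 | jumpTimes h k < (s : ℝ≥0∞) ∧ h s ≠ h (jumpTimes h k).toNNReal})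

/-- The martingale part `M(t) = |h(0)| + ∫₀ᵗ 1_{|h(s)| > c} d|h|(s)` of the rescaled
walk: the sum of the increments of `|h|` over jumps happening while `|h| > c`. -/
def martPart (c : ℝ) (h : ℝ≥0 → ℝ) (t : ℝ≥0) : ℝ :=
  |h 0| + ∑' k : ℕ,
    if jumpTimes h (k+1) ≤ (t : ℝ≥0∞) then
      (if c < |h ((jumpTimes h k).toNNReal)| then
        |h ((jumpTimes h (k+1)).toNNReal)| - |h ((jumpTimes h k).toNNReal)| else 0)
    else 0

/-- The occupation time of the barrier `[-c,c]` by the path `h` up to time `t`. -/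
def occBarrier (c : ℝ) (h : ℝ≥0 → ℝ) (t : ℝ≥0) : ℝ := occBelow c h t

/-- `μ` is the law on path space of (the projection to `ℝ` of) partially reflected
Brownian motion with permeability `γ` and diffusion coefficient `σ2` started from `x`. -/
def PRBMLawStart (γ : ℝ≥0∞) (σ2 : ℝ) (x : Rddot) (μ : Measure (ℝ≥0 → ℝ)) : Prop :=
  ∃ (Ω' : Type) (m' : MeasurableSpace Ω') (P' : @Measure Ω' m') (X : ℝ≥0 → Ω' → Rddot),
    @IsProbabilityMeasure Ω' m' P' ∧ @SolvesMP Ω' m' γ σ2 P' X ∧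
    (∀ᵐ ω ∂P', X 0 ω = x) ∧
    (∀ᵐ ω ∂P', Continuous fun t => (X t ω).val) ∧
    μ = @Measure.map Ω' (ℝ≥0 → ℝ) m' _ (fun ω t => (X t ω).val) P'



open Metric in
section

def phiAux (γ t z : ℝ) : ℝ := Real.exp (-(2*γ*z)) * gaussK t z

lemma gaussK_contDiff (t : ℝ) : ContDiff ℝ (⊤ : ℕ∞) (gaussK t) := by
  unfold gaussK
  exact contDiff_const.mul (Real.contDiff_exp.comp ((contDiff_id.pow 2).neg.div_const _))

lemma phiAux_contDiff (γ t : ℝ) : ContDiff ℝ (⊤ : ℕ∞) (phiAux γ t) := by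
  unfold phiAux
  exact (Real.contDiff_exp.comp ((contDiff_const.mul contDiff_id).neg)).mul (gaussK_contDiff t)

lemma gaussK_nonneg (t z : ℝ) : 0 ≤ gaussK t z := by unfold gaussK; positivity

lemma phiAux_nonneg (γ t z : ℝ) : 0 ≤ phiAux γ t z :=
  mul_nonneg (Real.exp_nonneg _) (gaussK_nonneg t z)

lemma gaussK_le (t : ℝ) (ht : 0 < t) (z : ℝ) : gaussK t z ≤ (Real.sqrt (2 * Real.pi * t))⁻¹ := by
  unfold gaussK
  have h1 : Real.exp (-(z^2) / (2*t)) ≤ 1 := by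
    rw [Real.exp_le_one_iff]
    apply div_nonpos_of_nonpos_of_nonneg <;> nlinarith [sq_nonneg z]
  calc (Real.sqrt (2*Real.pi*t))⁻¹ * Real.exp (-(z^2) / (2*t))
      ≤ (Real.sqrt (2*Real.pi*t))⁻¹ * 1 := mul_le_mul_of_nonneg_left h1 (by positivity)
    _ = _ := mul_one _

lemma phiAux_integrableOn (γ t : ℝ) (hγ : 0 < γ) (ht : 0 < t) (c : ℝ) :
    IntegrableOn (phiAux γ t) (Ioi c) := by
  have hb : IntegrableOn (fun z => (Real.sqrt (2*Real.pi*t))⁻¹ * Real.exp (-(2*γ) * z)) (Ioi c) :=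
    (exp_neg_integrableOn_Ioi c (by positivity)).const_mul _
  refine hb.mono' ((phiAux_contDiff γ t).continuous.aestronglyMeasurable.restrict) ?_
  filter_upwards with z
  rw [Real.norm_eq_abs, abs_of_nonneg (phiAux_nonneg γ t z)]
  unfold phiAux
  calc Real.exp (-(2*γ*z)) * gaussK t z
      ≤ Real.exp (-(2*γ*z)) * (Real.sqrt (2*Real.pi*t))⁻¹ :=
        mul_le_mul_of_nonneg_left (gaussK_le t ht z) (Real.exp_nonneg _)
    _ = (Real.sqrt (2*Real.pi*t))⁻¹ * Real.exp (-(2*γ)*z) := by ring_nf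

def Hf (γ t c : ℝ) : ℝ := ∫ z in Ioi c, phiAux γ t z

lemma Hf_split (γ t : ℝ) (hγ : 0 < γ) (ht : 0 < t) {b c : ℝ} (h : b ≤ c) :
    Hf γ t b = (∫ z in b..c, phiAux γ t z) + Hf γ t c := by
  unfold Hf
  rw [intervalIntegral.integral_of_le h,
    ← setIntegral_union Ioc_disjoint_Ioi_same measurableSet_Ioi
      ((phiAux_integrableOn γ t hγ ht b).mono_set Ioc_subset_Ioi_self)
      (phiAux_integrableOn γ t hγ ht c), Ioc_union_Ioi_eq_Ioi h]

lemma Hf_hasDerivAt (γ t : ℝ) (hγ : 0 < γ) (ht : 0 < t) (c : ℝ) :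
    HasDerivAt (Hf γ t) (-(phiAux γ t c)) c := by
  have hcont := (phiAux_contDiff γ t).continuous
  have hI : HasDerivAt (fun u => ∫ z in (c-1)..u, phiAux γ t z) (phiAux γ t c) c :=
    intervalIntegral.integral_hasDerivAt_right (hcont.intervalIntegrable _ _)
      (hcont.stronglyMeasurableAtFilter _ _) hcont.continuousAt
  have hg : HasDerivAt (fun u => Hf γ t (c-1) - ∫ z in (c-1)..u, phiAux γ t z)
      (-(phiAux γ t c)) c := hI.const_sub _
  refine hg.congr_of_eventuallyEq ?_
  filter_upwards [isOpen_Ioi.mem_nhds (show c - 1 < c by linarith)] with u hu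
  have := Hf_split γ t hγ ht (le_of_lt hu)
  linarith

lemma setIntegral_Ioi_comp_add (g : ℝ → ℝ) (c : ℝ) :
    ∫ z in Ioi c, g z = ∫ l in Ioi (0:ℝ), g (l + c) := by
  rw [← integral_indicator measurableSet_Ioi, ← integral_indicator measurableSet_Ioi]
  have h2 : (Ioi (0:ℝ)).indicator (fun l => g (l + c)) = fun l => (Ioi c).indicator g (l + c) := by
    funext l
    simp only [Set.indicator_apply, mem_Ioi, lt_add_iff_pos_left]
  rw [h2, integral_add_right_eq_self (fun z => (Ioi c).indicator g z) c]

lemma barrierInt_eq (γ t a b : ℝ) :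
    barrierInt γ t a b = Real.exp (2*γ*(a+b)) * Hf γ t (a+b) := by
  unfold barrierInt Hf
  rw [← integral_const_mul,
    setIntegral_Ioi_comp_add (fun z => Real.exp (2*γ*(a+b)) * phiAux γ t z) (a+b)]
  apply setIntegral_congr_fun measurableSet_Ioi
  intro l _
  simp only [phiAux]
  rw [show a + b + l = l + (a+b) by ring, ← mul_assoc, ← Real.exp_add]
  ring_nf

/-! ### Complex extension and analyticity of `Hf` -/

def PhiC (γ t : ℝ) (w : ℂ) : ℂ :=
  (((Real.sqrt (2*Real.pi*t))⁻¹ : ℝ) : ℂ) * Complex.exp (-(2*(γ:ℂ))*w - w^2 * (((2*t)⁻¹ : ℝ) : ℂ))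

def PhiCd (γ t : ℝ) (w : ℂ) : ℂ :=
  PhiC γ t w * (-(2*(γ:ℂ)) - 2*w*(((2*t)⁻¹ : ℝ) : ℂ))

lemma PhiC_hasDerivAt (γ t : ℝ) (u : ℂ) : HasDerivAt (PhiC γ t) (PhiCd γ t u) u := by
  have h1 : HasDerivAt (fun w : ℂ => -(2*(γ:ℂ))*w) (-(2*(γ:ℂ))) u := by
    simpa using (hasDerivAt_id u).const_mul (-(2*(γ:ℂ)))
  have h2 : HasDerivAt (fun w : ℂ => w^2 * (((2*t)⁻¹ : ℝ) : ℂ))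
      (2*u*(((2*t)⁻¹ : ℝ) : ℂ)) u := by
    have := (hasDerivAt_pow 2 u).mul_const (((2*t)⁻¹ : ℝ) : ℂ)
    simpa using this
  have h3 := ((h1.sub h2).cexp).const_mul ((((Real.sqrt (2*Real.pi*t))⁻¹ : ℝ) : ℂ))
  refine h3.congr_deriv ?_
  unfold PhiCd PhiC
  simp only [Pi.sub_apply]
  ring

lemma PhiC_real (γ t : ℝ) (z : ℝ) (ht : 0 < t) : PhiC γ t (z:ℂ) = ((phiAux γ t z : ℝ) : ℂ) := by
  unfold PhiC phiAux gaussK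
  rw [show -(2*(γ:ℂ))*(z:ℂ) - (z:ℂ)^2 * (((2*t)⁻¹ : ℝ) : ℂ)
      = ((-(2*γ*z) + -(z^2) / (2*t) : ℝ) : ℂ) by push_cast; ring, ← Complex.ofReal_exp]
  norm_cast
  rw [Real.exp_add]
  ring

lemma PhiC_abs (γ t : ℝ) (ht : 0 < t) (w : ℂ) :
    ‖PhiC γ t w‖
      = (Real.sqrt (2*Real.pi*t))⁻¹
        * Real.exp (-(2*γ)*w.re - (w.re^2 - w.im^2) * (2*t)⁻¹) := by
  unfold PhiC
  rw [norm_mul, Complex.norm_exp, Complex.norm_real, Real.norm_eq_abs, abs_of_nonneg (by positivity)]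
  congr 2
  simp [Complex.sub_re, Complex.mul_re, Complex.ofReal_re, Complex.ofReal_im, pow_two,
    Complex.neg_re, Complex.neg_im, Complex.mul_im]

def HC (γ t : ℝ) (w : ℂ) : ℂ := ∫ z in Ioi (0:ℝ), PhiC γ t ((z:ℂ) + w)

lemma PhiC_continuous (γ t : ℝ) : Continuous (PhiC γ t) := by
  unfold PhiC; fun_prop

lemma PhiCd_continuous (γ t : ℝ) : Continuous (PhiCd γ t) := by
  unfold PhiCd
  exact (PhiC_continuous γ t).mul (by fun_prop)

lemma PhiC_abs_le (γ t : ℝ) (hγ : 0 < γ) (ht : 0 < t) {z : ℝ} (hz : 0 ≤ z) {w : ℂ} {R : ℝ}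
    (hre : |w.re| ≤ R) (him : |w.im| ≤ R) :
    ‖PhiC γ t ((z:ℂ) + w)‖
      ≤ (Real.sqrt (2*Real.pi*t))⁻¹ * Real.exp (2*γ*R + R^2*(2*t)⁻¹) * Real.exp (-(2*γ)*z) := by
  rw [PhiC_abs γ t ht]
  have hre' : ((z:ℂ)+w).re = z + w.re := by simp
  have him' : ((z:ℂ)+w).im = w.im := by simp
  rw [hre', him']
  calc (Real.sqrt (2*Real.pi*t))⁻¹ * Real.exp (-(2*γ)*(z + w.re) - ((z + w.re)^2 - w.im^2) * (2*t)⁻¹)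
      ≤ (Real.sqrt (2*Real.pi*t))⁻¹ * Real.exp ((2*γ*R + R^2*(2*t)⁻¹) + -(2*γ)*z) := by
        apply mul_le_mul_of_nonneg_left _ (by positivity)
        apply Real.exp_le_exp.2
        have h1 : (0:ℝ) ≤ (z+w.re)^2 * (2*t)⁻¹ := by positivity
        have h2 : w.im^2 ≤ R^2 := by nlinarith [abs_le.mp him, abs_nonneg w.im]
        have h3 : -R ≤ w.re := (abs_le.mp hre).1
        have h4 : (0:ℝ) < (2*t)⁻¹ := by positivity
        nlinarith [mul_le_mul_of_nonneg_right h2 h4.le]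
    _ = (Real.sqrt (2*Real.pi*t))⁻¹ * Real.exp (2*γ*R + R^2*(2*t)⁻¹) * Real.exp (-(2*γ)*z) := by
        rw [Real.exp_add]; ring

lemma HC_hasDerivAt (γ t : ℝ) (hγ : 0 < γ) (ht : 0 < t) (w₀ : ℂ) :
    HasDerivAt (HC γ t) (∫ z in Ioi (0:ℝ), PhiCd γ t ((z:ℂ) + w₀)) w₀ := by
  set R : ℝ := ‖w₀‖ + 1 with hRdef
  have hR : 0 < R := by positivity
  set Cc : ℝ := (Real.sqrt (2*Real.pi*t))⁻¹ * Real.exp (2*γ*R + R^2*(2*t)⁻¹) with hCcdef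
  have hCc : 0 ≤ Cc := by positivity
  have hball : ∀ w ∈ ball w₀ 1, |w.re| ≤ R ∧ |w.im| ≤ R ∧ ‖w‖ ≤ R := by
    intro w hw
    have h1 : ‖w - w₀‖ < 1 := by
      simpa [Complex.dist_eq] using mem_ball.mp hw
    have h2 : ‖w‖ ≤ R := by
      calc ‖w‖ = ‖w - w₀ + w₀‖ := by ring_nf
        _ ≤ ‖w - w₀‖ + ‖w₀‖ := norm_add_le _ _
        _ ≤ R := by rw [hRdef]; linarith
    exact ⟨(Complex.abs_re_le_norm w).trans h2, (Complex.abs_im_le_norm w).trans h2, h2⟩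
  have key := hasDerivAt_integral_of_dominated_loc_of_deriv_le
    (μ := volume.restrict (Ioi (0:ℝ))) (x₀ := w₀)
    (F := fun w (z : ℝ) => PhiC γ t ((z:ℂ) + w)) (F' := fun w (z : ℝ) => PhiCd γ t ((z:ℂ) + w))
    (bound := fun z => Cc * (2*γ + R*t⁻¹ + (γ*t)⁻¹) * Real.exp (-γ * z)) (ball_mem_nhds w₀ one_pos)
    ?_ ?_ ?_ ?_ ?_ ?_
  · exact key.2
  · refine Filter.Eventually.of_forall fun w => ?_
    exact ((PhiC_continuous γ t).comp (Complex.continuous_ofReal.add continuous_const)).aestronglyMeasurable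
  · -- integrability of F w₀
    refine (((exp_neg_integrableOn_Ioi 0 (by positivity : (0:ℝ) < 2*γ)).const_mul Cc).mono'
      (((PhiC_continuous γ t).comp
        (Complex.continuous_ofReal.add continuous_const)).aestronglyMeasurable) ?_)
    filter_upwards [ae_restrict_mem measurableSet_Ioi] with z hz
    obtain ⟨h1, h2, _⟩ := hball w₀ (mem_ball_self one_pos)
    have := PhiC_abs_le γ t hγ ht (le_of_lt hz) h1 h2
    simpa [hCcdef, mul_assoc] using this
  · exact ((PhiCd_continuous γ t).comp
      (Complex.continuous_ofReal.add continuous_const)).aestronglyMeasurable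
  · -- the uniform bound on the derivative
    filter_upwards [ae_restrict_mem measurableSet_Ioi] with z hz
    intro w hw
    obtain ⟨h1, h2, h3⟩ := hball w hw
    have hz' : (0:ℝ) ≤ z := le_of_lt hz
    have hP : ‖PhiC γ t ((z:ℂ) + w)‖ ≤ Cc * Real.exp (-(2*γ)*z) := by
      simpa [hCcdef, mul_assoc] using PhiC_abs_le γ t hγ ht hz' h1 h2
    have hfac : ‖-(2*(γ:ℂ)) - 2*((z:ℂ)+w)*(((2*t)⁻¹ : ℝ) : ℂ)‖
        ≤ 2*γ + (z + R) * t⁻¹ := by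
      have e1 : ‖-(2*(γ:ℂ))‖ = 2*γ := by
        rw [show (-(2*(γ:ℂ))) = ((-(2*γ):ℝ):ℂ) by push_cast; ring, Complex.norm_real, Real.norm_eq_abs,
          abs_of_nonpos (by linarith)]
        ring
      have e2 : ‖2*((z:ℂ)+w)*(((2*t)⁻¹ : ℝ) : ℂ)‖
          ≤ 2 * (z + R) * (2*t)⁻¹ := by
        rw [norm_mul, norm_mul, Complex.norm_real, Real.norm_eq_abs, abs_of_nonneg (by positivity : (0:ℝ) ≤ (2*t)⁻¹),
          Complex.norm_two]
        have : ‖(z:ℂ)+w‖ ≤ z + R := by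
          calc ‖(z:ℂ)+w‖ ≤ ‖(z:ℂ)‖ + ‖w‖ := norm_add_le _ _
            _ ≤ z + R := by rw [Complex.norm_real, Real.norm_eq_abs, abs_of_nonneg hz']; linarith
        have h2t : (0:ℝ) ≤ (2*t)⁻¹ := by positivity
        nlinarith
      calc ‖-(2*(γ:ℂ)) - 2*((z:ℂ)+w)*(((2*t)⁻¹ : ℝ) : ℂ)‖
          ≤ ‖-(2*(γ:ℂ))‖ + ‖2*((z:ℂ)+w)*(((2*t)⁻¹ : ℝ) : ℂ)‖ :=
            by simpa using
              norm_sub_le (-(2*(γ:ℂ))) (2*((z:ℂ)+w)*(((2*t)⁻¹ : ℝ) : ℂ))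
        _ ≤ 2*γ + (z + R) * t⁻¹ := by
            rw [e1]
            have : 2 * (z + R) * (2*t)⁻¹ = (z + R) * t⁻¹ := by
              rw [mul_inv]; ring
            linarith [e2.trans_eq this]
    have hfac0 : (0:ℝ) ≤ 2*γ + (z + R) * t⁻¹ := by positivity
    have hnorm : ‖PhiCd γ t ((z:ℂ) + w)‖
        ≤ (Cc * Real.exp (-(2*γ)*z)) * (2*γ + (z + R) * t⁻¹) := by
      rw [PhiCd, norm_mul]
      exact mul_le_mul hP hfac (norm_nonneg _) (by positivity)
    refine hnorm.trans ?_
    have e3 : Real.exp (-(2*γ)*z) = Real.exp (-γ*z) * Real.exp (-γ*z) := by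
      rw [← Real.exp_add]; ring_nf
    have e4 : Real.exp (-γ*z) ≤ 1 := Real.exp_le_one_iff.2 (by nlinarith)
    have e5 : z * Real.exp (-γ*z) ≤ γ⁻¹ := by
      rw [show -γ*z = -(γ*z) by ring, Real.exp_neg, ← div_eq_mul_inv, inv_eq_one_div,
        div_le_div_iff₀ (Real.exp_pos _) hγ]
      nlinarith [Real.add_one_le_exp (γ*z)]
    have e6 : (0:ℝ) < Real.exp (-γ*z) := Real.exp_pos _
    have goal1 : Real.exp (-γ*z) * (2*γ + (z + R) * t⁻¹) ≤ 2*γ + R*t⁻¹ + (γ*t)⁻¹ := by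
      have i1 : Real.exp (-γ*z) * (2*γ + R*t⁻¹) ≤ 2*γ + R*t⁻¹ :=
        mul_le_of_le_one_left (by positivity) e4
      have i2 : Real.exp (-γ*z) * (z * t⁻¹) ≤ (γ*t)⁻¹ := by
        rw [mul_inv]
        calc Real.exp (-γ*z) * (z * t⁻¹) = (z * Real.exp (-γ*z)) * t⁻¹ := by ring
          _ ≤ γ⁻¹ * t⁻¹ := mul_le_mul_of_nonneg_right e5 (by positivity)
      have hsplit : Real.exp (-γ*z) * (2*γ + (z + R) * t⁻¹)
          = Real.exp (-γ*z) * (2*γ + R*t⁻¹) + Real.exp (-γ*z) * (z * t⁻¹) := by ring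
      rw [hsplit]; linarith
    calc (Cc * Real.exp (-(2*γ)*z)) * (2*γ + (z + R) * t⁻¹)
        = Cc * (Real.exp (-γ*z) * (2*γ + (z + R) * t⁻¹)) * Real.exp (-γ*z) := by
          rw [e3]; ring
      _ ≤ Cc * (2*γ + R*t⁻¹ + (γ*t)⁻¹) * Real.exp (-γ*z) :=
          mul_le_mul_of_nonneg_right (mul_le_mul_of_nonneg_left goal1 hCc) e6.le
  · exact (((exp_neg_integrableOn_Ioi 0 hγ)).const_mul _)
  · refine Filter.Eventually.of_forall fun z => fun w _ => ?_
    have h := (PhiC_hasDerivAt γ t ((z:ℂ) + w)).comp w ((hasDerivAt_id w).const_add (z:ℂ))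
    simp only [mul_one] at h; exact h

lemma HC_differentiable (γ t : ℝ) (hγ : 0 < γ) (ht : 0 < t) : Differentiable ℂ (HC γ t) :=
  fun w₀ => (HC_hasDerivAt γ t hγ ht w₀).differentiableAt

lemma HC_real (γ t : ℝ) (ht : 0 < t) (c : ℝ) : HC γ t (c:ℂ) = ((Hf γ t c : ℝ) : ℂ) := by
  have hHfc : Hf γ t c = ∫ z in Ioi (0:ℝ), phiAux γ t (z + c) := setIntegral_Ioi_comp_add _ c
  unfold HC
  rw [hHfc]
  calc ∫ z in Ioi (0:ℝ), PhiC γ t ((z:ℂ) + (c:ℂ))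
      = ∫ z in Ioi (0:ℝ), ((phiAux γ t (z + c) : ℝ) : ℂ) := by
        apply setIntegral_congr_fun measurableSet_Ioi
        intro z _
        show PhiC γ t ((z:ℂ) + (c:ℂ)) = ((phiAux γ t (z + c) : ℝ) : ℂ)
        rw [show (z:ℂ) + (c:ℂ) = ((z+c:ℝ):ℂ) by push_cast; ring, PhiC_real γ t _ ht]
    _ = ((∫ z in Ioi (0:ℝ), phiAux γ t (z + c) : ℝ) : ℂ) := integral_ofReal

lemma Hf_contDiff (γ t : ℝ) (hγ : 0 < γ) (ht : 0 < t) : ContDiff ℝ (⊤ : ℕ∞) (Hf γ t) := by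
  refine (?_ : ContDiff ℝ ⊤ (Hf γ t)).of_le le_top
  rw [contDiff_omega_iff_analyticOnNhd]
  intro c _
  have h1 : AnalyticAt ℂ (HC γ t) (Complex.ofRealCLM c) :=
    (HC_differentiable γ t hγ ht).analyticAt _
  have h3 : AnalyticAt ℝ (fun x : ℝ => HC γ t (Complex.ofRealCLM x)) c :=
    (h1.restrictScalars).comp (Complex.ofRealCLM.analyticAt c)
  have h4 : AnalyticAt ℝ (fun x : ℝ => Complex.reCLM (HC γ t (Complex.ofRealCLM x))) c :=
    (Complex.reCLM.analyticAt _).comp h3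
  refine h4.congr ?_
  filter_upwards with x
  simp only [Complex.ofRealCLM_apply, Complex.reCLM_apply]
  rw [HC_real γ t ht x, Complex.ofReal_re]

end

/-- For every `γ ∈ (0,∞)`, `t > 0` and fixed `x ∈ ℝ̈` with `|x| > 0`,
the transition density `y ↦ g_t(x,y)` belongs to the domain of the transmission
condition: it is smooth on each half-line and
`∂_y g_t(x,y)|_{0⁻} = ∂_y g_t(x,y)|_{0⁺} = γ(g_t(x,0⁺) - g_t(x,0⁻))`.
Here the half-lines are parametrized by the distance to the origin, so the one-sided
derivative at `0⁻` equals minus the derivative of the opposite-side part at `0`. -/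
theorem transition_density_transmission (γ t : ℝ) (hγ : 0 < γ) (ht : 0 < t)
    (x : Rddot) (hx : 0 < x.abs) :
    ContDiffOn ℝ (⊤ : ℕ∞) (fun yv => transDens γ t x.abs yv true) (Set.Ici 0) ∧
    ContDiffOn ℝ (⊤ : ℕ∞) (fun yv => transDens γ t x.abs yv false) (Set.Ici 0) ∧
    -(derivWithin (fun yv => transDens γ t x.abs yv false) (Set.Ici 0) 0)
      = derivWithin (fun yv => transDens γ t x.abs yv true) (Set.Ici 0) 0 ∧
    derivWithin (fun yv => transDens γ t x.abs yv true) (Set.Ici 0) 0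
      = γ * (transDens γ t x.abs 0 true - transDens γ t x.abs 0 false) := by
  have hfalse : (fun yv => transDens γ t x.abs yv false)
      = fun b => 2*γ*(Real.exp (2*γ*(x.abs+b)) * Hf γ t (x.abs+b)) := by
    funext b
    simp only [transDens, Bool.false_eq_true, if_false]
    rw [barrierInt_eq γ t x.abs b]
  have htrue : (fun yv => transDens γ t x.abs yv true)
      = fun b => gaussK t (x.abs-b) + gaussK t (x.abs+b)
          - 2*γ*(Real.exp (2*γ*(x.abs+b)) * Hf γ t (x.abs+b)) := by
    funext b
    simp only [transDens, if_true]
    rw [barrierInt_eq γ t x.abs b]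
  have hFm : ContDiff ℝ (⊤ : ℕ∞) (fun b : ℝ => 2*γ*(Real.exp (2*γ*(x.abs+b)) * Hf γ t (x.abs+b))) := by
    refine contDiff_const.mul (ContDiff.mul ?_ ?_)
    · exact Real.contDiff_exp.comp (contDiff_const.mul (contDiff_const.add contDiff_id))
    · exact (Hf_contDiff γ t hγ ht).comp (contDiff_const.add contDiff_id)
  have hFp : ContDiff ℝ (⊤ : ℕ∞) (fun b : ℝ => gaussK t (x.abs-b) + gaussK t (x.abs+b)
      - 2*γ*(Real.exp (2*γ*(x.abs+b)) * Hf γ t (x.abs+b))) := by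
    refine ContDiff.sub (ContDiff.add ?_ ?_) hFm
    · exact (gaussK_contDiff t).comp (contDiff_const.sub contDiff_id)
    · exact (gaussK_contDiff t).comp (contDiff_const.add contDiff_id)
  -- derivatives at 0
  have hA : HasDerivAt (fun b : ℝ => x.abs + b) 1 0 := by
    simpa using (hasDerivAt_id (0:ℝ)).const_add x.abs
  have hL : HasDerivAt (fun b : ℝ => 2*γ*(x.abs+b)) (2*γ*1) 0 := hA.const_mul (2*γ)
  have hE : HasDerivAt (fun b : ℝ => Real.exp (2*γ*(x.abs+b))) (Real.exp (2*γ*x.abs) * (2*γ)) 0 := by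
    simpa using hL.exp
  have hH : HasDerivAt (fun b : ℝ => Hf γ t (x.abs+b)) (-(phiAux γ t x.abs)) 0 := by
    have h := (Hf_hasDerivAt γ t hγ ht (x.abs+0)).comp 0 hA
    simp only [add_zero, mul_one] at h; exact h
  have hM : HasDerivAt (fun b : ℝ => Real.exp (2*γ*(x.abs+b)) * Hf γ t (x.abs+b))
      (Real.exp (2*γ*x.abs) * (2*γ) * Hf γ t x.abs
        + Real.exp (2*γ*x.abs) * -(phiAux γ t x.abs)) 0 := by
    have h := hE.mul hH
    simp only [add_zero] at h; exact h
  have hFmD : HasDerivAt (fun b : ℝ => 2*γ*(Real.exp (2*γ*(x.abs+b)) * Hf γ t (x.abs+b)))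
      (2*γ*(Real.exp (2*γ*x.abs) * (2*γ) * Hf γ t x.abs
        + Real.exp (2*γ*x.abs) * -(phiAux γ t x.abs))) 0 := hM.const_mul _
  have hGm : HasDerivAt (fun b : ℝ => gaussK t (x.abs-b)) (-(deriv (gaussK t) x.abs)) 0 := by
    have hg : HasDerivAt (gaussK t) (deriv (gaussK t) (x.abs-0)) (x.abs-0) :=
      ((gaussK_contDiff t).differentiable (by simp) (x.abs-0)).hasDerivAt
    have hsub : HasDerivAt (fun b : ℝ => x.abs - b) (-1) 0 := by
      simpa using (hasDerivAt_id (0:ℝ)).const_sub x.abs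
    have h := hg.comp 0 hsub
    simp only [sub_zero, mul_neg, mul_one] at h; exact h
  have hGp : HasDerivAt (fun b : ℝ => gaussK t (x.abs+b)) (deriv (gaussK t) x.abs) 0 := by
    have hg : HasDerivAt (gaussK t) (deriv (gaussK t) (x.abs+0)) (x.abs+0) :=
      ((gaussK_contDiff t).differentiable (by simp) (x.abs+0)).hasDerivAt
    have h := hg.comp 0 hA
    simp only [add_zero, mul_one] at h; exact h
  have hFpD : HasDerivAt (fun b : ℝ => gaussK t (x.abs-b) + gaussK t (x.abs+b)
      - 2*γ*(Real.exp (2*γ*(x.abs+b)) * Hf γ t (x.abs+b)))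
      (-(deriv (gaussK t) x.abs) + deriv (gaussK t) x.abs
        - 2*γ*(Real.exp (2*γ*x.abs) * (2*γ) * Hf γ t x.abs
          + Real.exp (2*γ*x.abs) * -(phiAux γ t x.abs))) 0 := (hGm.add hGp).sub hFmD
  have hud : UniqueDiffWithinAt ℝ (Set.Ici (0:ℝ)) 0 := uniqueDiffOn_Ici 0 0 Set.self_mem_Ici
  have dF : derivWithin (fun yv => transDens γ t x.abs yv false) (Set.Ici 0) 0
      = 2*γ*(Real.exp (2*γ*x.abs) * (2*γ) * Hf γ t x.abs
        + Real.exp (2*γ*x.abs) * -(phiAux γ t x.abs)) := by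
    rw [hfalse]
    exact hFmD.hasDerivWithinAt.derivWithin hud
  have dT : derivWithin (fun yv => transDens γ t x.abs yv true) (Set.Ici 0) 0
      = -(deriv (gaussK t) x.abs) + deriv (gaussK t) x.abs
        - 2*γ*(Real.exp (2*γ*x.abs) * (2*γ) * Hf γ t x.abs
          + Real.exp (2*γ*x.abs) * -(phiAux γ t x.abs)) := by
    rw [htrue]
    exact hFpD.hasDerivWithinAt.derivWithin hud
  refine ⟨?_, ?_, ?_, ?_⟩
  · rw [htrue]; exact hFp.contDiffOn
  · rw [hfalse]; exact hFm.contDiffOn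
  · rw [dF, dT]; ring
  · rw [dT]
    have h0t : transDens γ t x.abs 0 true
        = gaussK t x.abs + gaussK t x.abs - 2*γ*(Real.exp (2*γ*x.abs) * Hf γ t x.abs) := by
      have h := congrFun htrue 0
      simpa using h
    have h0f : transDens γ t x.abs 0 false
        = 2*γ*(Real.exp (2*γ*x.abs) * Hf γ t x.abs) := by
      have h := congrFun hfalse 0
      simpa using h
    rw [h0t, h0f, show phiAux γ t x.abs = Real.exp (-(2*γ*x.abs)) * gaussK t x.abs from rfl]
    have hexp : Real.exp (2*γ*x.abs) * Real.exp (-(2*γ*x.abs)) = 1 := by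
      rw [← Real.exp_add]; simp
    linear_combination (2*γ*gaussK t x.abs) * hexp

end
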